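/- Let L > 0 and let φ : [0, L] → ℝ be a positive continuous function with 0 < m ≤ φ ≤ M. Suppose the spectral gap of the Neumann Schrödinger operator on (0,L) with ground state φ equals the lowest nonzero eigenvalue of the weighted Neumann form u ↦ ∫_0^L (u')² φ² / ∫_0^L u² φ² (ground state transformation). Then the spectral gap Γ satisfies Γ ≥ (m/M)²·π²/L². -/

import Mathlib

/-!
For `u` orthogonal to the constants in `L²(ρ)` and any constant `c`,
`∫ u² ρ ≤ ∫ (u - c)² ρ ≤ M ∫ (u - c)²`. Taking for `c` the value of `u` at the
midpoint, each half of the interval carries a Dirichlet condition there, and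
Picone's identity with the ground state `cos` gives the Wirtinger bound
`(π / L)² ∫ (u - c)² ≤ ∫ u'² ≤ m⁻¹ ∫ u'² ρ`. With `ρ = φ²` and bounds
`m² ≤ ρ ≤ M²` this is Kirsch's estimate of the spectral gap.
-/

open Real intervalIntegral

open Set Filter Topology

lemma hasDerivAt_tan_one_add_tan_sq {x : ℝ} (hx : cos x ≠ 0) :
    HasDerivAt tan (1 + tan x ^ 2) x := by
  convert hasDerivAt_tan hx using 1
  rw [← inv_one_add_tan_sq hx, one_div, inv_inv]

lemma sq_mul_integral_sq_le_integral_deriv_sq_of_mul_lt_pi_div_two {a b k : ℝ} (hab : a ≤ b)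
    (hk : 0 ≤ k) (hkb : k * (b - a) < π / 2) {v v' : ℝ → ℝ}
    (hv : ∀ x ∈ Icc a b, HasDerivAt v (v' x) x) (hv' : ContinuousOn v' (Icc a b))
    (hvb : v b = 0) :
    k ^ 2 * ∫ x in a..b, v x ^ 2 ≤ ∫ x in a..b, v' x ^ 2 := by
  set T : ℝ → ℝ := fun x => tan (k * (x - a))
  have hT : ∀ x ∈ Icc a b, HasDerivAt T (k * (1 + T x ^ 2)) x := fun x hx => by
    have hcos : cos (k * (x - a)) ≠ 0 := (cos_pos_of_mem_Ioo
      ⟨by nlinarith [pi_pos, hx.1], by nlinarith [hx.2]⟩).ne'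
    refine ((hasDerivAt_tan_one_add_tan_sq hcos).comp x
      (((hasDerivAt_id x).sub_const a).const_mul k)).congr_deriv ?_
    simp only [T]; ring
  have hvc : ContinuousOn v (Icc a b) := fun x hx => (hv x hx).continuousAt.continuousWithinAt
  have hTc : ContinuousOn T (Icc a b) := fun x hx => (hT x hx).continuousAt.continuousWithinAt
  -- Picone's identity with the positive function `cos (k (x - a))`:
  -- `v'² - k² v² = (v' + k v T)² - k (v² T)'`, and `v² T` vanishes at both ends.
  set F' : ℝ → ℝ := fun x => 2 * v x * v' x * T x + v x ^ 2 * (k * (1 + T x ^ 2))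
  have hF : ∀ x ∈ uIcc a b, HasDerivAt (fun y => v y ^ 2 * T y) (F' x) x := fun x hx => by
    rw [uIcc_of_le hab] at hx
    refine (((hv x hx).fun_pow 2).mul (hT x hx)).congr_deriv ?_
    norm_num [F']
  have hF'c : ContinuousOn F' (Icc a b) := by fun_prop
  have hF'_integral : ∫ x in a..b, F' x = 0 := by
    rw [integral_eq_sub_of_hasDerivAt hF (hF'c.intervalIntegrable_of_Icc hab), hvb]
    simp [T]
  have hpointwise : ∀ x ∈ Icc a b, k ^ 2 * v x ^ 2 - v' x ^ 2 ≤ k * F' x := fun x _ => by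
    nlinarith [sq_nonneg (v' x + k * v x * T x)]
  have hmono : ∫ x in a..b, (k ^ 2 * v x ^ 2 - v' x ^ 2) ≤ ∫ x in a..b, k * F' x :=
    integral_mono_on hab (ContinuousOn.intervalIntegrable_of_Icc hab (by fun_prop))
      (ContinuousOn.intervalIntegrable_of_Icc hab (by fun_prop)) hpointwise
  rwa [integral_const_mul, hF'_integral, mul_zero, integral_sub, integral_const_mul,
    sub_nonpos] at hmono
  all_goals exact ContinuousOn.intervalIntegrable_of_Icc hab (by fun_prop)

lemma pi_div_two_sq_mul_integral_sq_le_of_right_eq_zero {a b : ℝ} (hab : a < b)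
    {v v' : ℝ → ℝ} (hv : ∀ x ∈ Icc a b, HasDerivAt v (v' x) x)
    (hv' : ContinuousOn v' (Icc a b)) (hvb : v b = 0) :
    (π / (2 * (b - a))) ^ 2 * ∫ x in a..b, v x ^ 2 ≤ ∫ x in a..b, v' x ^ 2 := by
  have hba : 0 < b - a := sub_pos.2 hab
  have hK : 0 < π / (2 * (b - a)) := by positivity
  refine le_of_tendsto (x := 𝓝[<] (π / (2 * (b - a))))
    (((continuous_pow 2).mul continuous_const).tendsto _ |>.mono_left nhdsWithin_le_nhds) ?_
  filter_upwards [Ioo_mem_nhdsLT hK] with k hk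
  refine sq_mul_integral_sq_le_integral_deriv_sq_of_mul_lt_pi_div_two hab.le hk.1.le ?_
    hv hv' hvb
  calc k * (b - a) < π / (2 * (b - a)) * (b - a) := by gcongr; exact hk.2
    _ = π / 2 := by field_simp

lemma pi_div_two_sq_mul_integral_sq_le_of_left_eq_zero {a b : ℝ} (hab : a < b)
    {v v' : ℝ → ℝ} (hv : ∀ x ∈ Icc a b, HasDerivAt v (v' x) x)
    (hv' : ContinuousOn v' (Icc a b)) (hva : v a = 0) :
    (π / (2 * (b - a))) ^ 2 * ∫ x in a..b, v x ^ 2 ≤ ∫ x in a..b, v' x ^ 2 := by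
  have hrefl : ∀ x ∈ Icc a b, a + b - x ∈ Icc a b :=
    fun x hx => ⟨by linarith [hx.2], by linarith [hx.1]⟩
  have hreflected := pi_div_two_sq_mul_integral_sq_le_of_right_eq_zero hab
    (v := fun x => v (a + b - x)) (v' := fun x => -v' (a + b - x))
    (fun x hx => (hv _ (hrefl x hx)).comp_const_sub (a + b) x)
    ((hv'.comp (by fun_prop) fun x hx => hrefl x hx).neg) (by simpa using hva)
  simpa only [neg_sq, integral_comp_sub_left (fun x => v x ^ 2),
    integral_comp_sub_left (fun x => v' x ^ 2), add_sub_cancel_right, add_sub_cancel_left]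
    using hreflected

lemma pi_div_sq_mul_integral_sub_midpoint_sq_le {a b : ℝ} (hab : a < b) {u u' : ℝ → ℝ}
    (hu : ∀ x ∈ Icc a b, HasDerivAt u (u' x) x) (hu' : ContinuousOn u' (Icc a b)) :
    (π / (b - a)) ^ 2 * ∫ x in a..b, (u x - u ((a + b) / 2)) ^ 2 ≤
      ∫ x in a..b, u' x ^ 2 := by
  set c := (a + b) / 2 with hc
  have hac : a < c := by linarith
  have hcb : c < b := by linarith
  have hleft : Icc a c ⊆ Icc a b := Icc_subset_Icc_right hcb.le
  have hright : Icc c b ⊆ Icc a b := Icc_subset_Icc_left hac.le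
  have hsplit : ∀ f : ℝ → ℝ, ContinuousOn f (Icc a b) →
      ∫ x in a..b, f x = (∫ x in a..c, f x) + ∫ x in c..b, f x := fun f hf =>
    (integral_add_adjacent_intervals ((hf.mono hleft).intervalIntegrable_of_Icc hac.le)
      ((hf.mono hright).intervalIntegrable_of_Icc hcb.le)).symm
  have hv : ∀ x ∈ Icc a b, HasDerivAt (fun y => u y - u c) (u' x) x :=
    fun x hx => (hu x hx).sub_const _
  have hL := pi_div_two_sq_mul_integral_sq_le_of_right_eq_zero hac
    (fun x hx => hv x (hleft hx)) (hu'.mono hleft) (sub_self _)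
  have hR := pi_div_two_sq_mul_integral_sq_le_of_left_eq_zero hcb
    (fun x hx => hv x (hright hx)) (hu'.mono hright) (sub_self _)
  rw [show 2 * (c - a) = b - a by ring] at hL
  rw [show 2 * (b - c) = b - a by ring] at hR
  have hucont : ContinuousOn u (Icc a b) :=
    fun x hx => (hu x hx).continuousAt.continuousWithinAt
  rw [hsplit _ (by fun_prop), hsplit _ (by fun_prop)]
  linarith

lemma integral_sq_mul_le_integral_sub_sq_mul {a b : ℝ} (hab : a ≤ b) {u ρ : ℝ → ℝ}
    (hu : ContinuousOn u (Icc a b)) (hρ : ContinuousOn ρ (Icc a b))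
    (hρ_nonneg : ∀ x ∈ Icc a b, 0 ≤ ρ x) (horth : ∫ x in a..b, u x * ρ x = 0) (c : ℝ) :
    ∫ x in a..b, u x ^ 2 * ρ x ≤ ∫ x in a..b, (u x - c) ^ 2 * ρ x := by
  have hexpand : ∫ x in a..b, (u x - c) ^ 2 * ρ x = (∫ x in a..b, u x ^ 2 * ρ x)
      + c ^ 2 * (∫ x in a..b, ρ x) - 2 * c * ∫ x in a..b, u x * ρ x := by
    rw [← integral_const_mul, ← integral_const_mul, ← integral_add, ← integral_sub]
    · exact integral_congr fun x _ => by ring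
    all_goals exact ContinuousOn.intervalIntegrable_of_Icc hab (by fun_prop)
  have hmass : 0 ≤ ∫ x in a..b, ρ x := integral_nonneg hab hρ_nonneg
  rw [hexpand, horth]
  nlinarith [mul_nonneg (sq_nonneg c) hmass]

lemma weighted_poincare_of_integral_mul_eq_zero {a b m M : ℝ} (hab : a < b) (hm : 0 ≤ m)
    {ρ u u' : ℝ → ℝ} (hρ : ContinuousOn ρ (Icc a b))
    (hρ_bounds : ∀ x ∈ Icc a b, m ≤ ρ x ∧ ρ x ≤ M)
    (hu : ∀ x ∈ Icc a b, HasDerivAt u (u' x) x) (hu' : ContinuousOn u' (Icc a b))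
    (horth : ∫ x in a..b, u x * ρ x = 0) :
    m * (π / (b - a)) ^ 2 * ∫ x in a..b, u x ^ 2 * ρ x ≤
      M * ∫ x in a..b, u' x ^ 2 * ρ x := by
  set c := u ((a + b) / 2)
  have hucont : ContinuousOn u (Icc a b) :=
    fun x hx => (hu x hx).continuousAt.continuousWithinAt
  obtain ⟨hma, haM⟩ := hρ_bounds a (left_mem_Icc.2 hab.le)
  have hM : 0 ≤ M := hm.trans (hma.trans haM)
  have hupper : ∫ x in a..b, (u x - c) ^ 2 * ρ x ≤ M * ∫ x in a..b, (u x - c) ^ 2 := by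
    rw [← integral_const_mul]
    refine integral_mono_on hab.le (ContinuousOn.intervalIntegrable_of_Icc hab.le (by fun_prop))
      (ContinuousOn.intervalIntegrable_of_Icc hab.le (by fun_prop)) fun x hx => ?_
    rw [mul_comm]
    exact mul_le_mul_of_nonneg_right (hρ_bounds x hx).2 (sq_nonneg _)
  have hlower : m * ∫ x in a..b, u' x ^ 2 ≤ ∫ x in a..b, u' x ^ 2 * ρ x := by
    rw [← integral_const_mul]
    refine integral_mono_on hab.le (ContinuousOn.intervalIntegrable_of_Icc hab.le (by fun_prop))
      (ContinuousOn.intervalIntegrable_of_Icc hab.le (by fun_prop)) fun x hx => ?_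
    rw [mul_comm]
    exact mul_le_mul_of_nonneg_left (hρ_bounds x hx).1 (sq_nonneg _)
  calc m * (π / (b - a)) ^ 2 * ∫ x in a..b, u x ^ 2 * ρ x
      ≤ m * (π / (b - a)) ^ 2 * ∫ x in a..b, (u x - c) ^ 2 * ρ x := by
        gcongr
        exact integral_sq_mul_le_integral_sub_sq_mul hab.le hucont hρ
          (fun x hx => hm.trans (hρ_bounds x hx).1) horth c
    _ ≤ m * (π / (b - a)) ^ 2 * (M * ∫ x in a..b, (u x - c) ^ 2) := by gcongr
    _ = M * (m * ((π / (b - a)) ^ 2 * ∫ x in a..b, (u x - c) ^ 2)) := by ring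
    _ ≤ M * (m * ∫ x in a..b, u' x ^ 2) := by
        gcongr
        exact pi_div_sq_mul_integral_sub_midpoint_sq_le hab hu hu'
    _ ≤ M * ∫ x in a..b, u' x ^ 2 * ρ x := by gcongr

def weightedRayleighQuotients (a b : ℝ) (ρ : ℝ → ℝ) : Set ℝ :=
  { r | ∃ u u' : ℝ → ℝ,
      (∀ x ∈ Icc a b, HasDerivAt u (u' x) x) ∧ ContinuousOn u' (Icc a b) ∧
      (∫ x in a..b, u x * ρ x) = 0 ∧ (∫ x in a..b, u x ^ 2 * ρ x) ≠ 0 ∧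
      r = (∫ x in a..b, u' x ^ 2 * ρ x) / ∫ x in a..b, u x ^ 2 * ρ x }

lemma weightedRayleighQuotients_nonempty {a b : ℝ} (hab : a < b) {ρ : ℝ → ℝ}
    (hρ : ContinuousOn ρ (Icc a b)) (hρ_pos : ∀ x ∈ Icc a b, 0 < ρ x) :
    (weightedRayleighQuotients a b ρ).Nonempty := by
  have hmass : 0 < ∫ x in a..b, ρ x :=
    integral_pos hab hρ (fun x hx => (hρ_pos x (Ioc_subset_Icc_self hx)).le)
      ⟨a, left_mem_Icc.2 hab.le, hρ_pos a (left_mem_Icc.2 hab.le)⟩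
  set c := (∫ x in a..b, x * ρ x) / ∫ x in a..b, ρ x
  refine ⟨_, fun x => x - c, fun _ => 1, fun x _ => (hasDerivAt_id x).sub_const c,
    continuousOn_const, ?_, ?_, rfl⟩
  · rw [integral_congr (g := fun x => x * ρ x - c * ρ x) fun x _ => by ring, integral_sub,
      integral_const_mul, div_mul_cancel₀ _ hmass.ne', sub_self]
    all_goals exact ContinuousOn.intervalIntegrable_of_Icc hab.le (by fun_prop)
  · obtain ⟨x, hx, hxc⟩ : ∃ x ∈ Icc a b, x ≠ c := by
      by_cases hac : a = c
      · exact ⟨b, right_mem_Icc.2 hab.le, hac ▸ hab.ne'⟩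
      · exact ⟨a, left_mem_Icc.2 hab.le, hac⟩
    refine (integral_pos hab (by fun_prop) (fun y hy => ?_) ⟨x, hx, ?_⟩).ne'
    · exact mul_nonneg (sq_nonneg _) (hρ_pos y (Ioc_subset_Icc_self hy)).le
    · exact mul_pos (pow_two_pos_of_ne_zero (sub_ne_zero.2 hxc)) (hρ_pos x hx)

lemma le_of_mem_weightedRayleighQuotients {a b m M r : ℝ} (hab : a < b) (hm : 0 < m)
    {ρ : ℝ → ℝ} (hρ : ContinuousOn ρ (Icc a b))
    (hρ_bounds : ∀ x ∈ Icc a b, m ≤ ρ x ∧ ρ x ≤ M)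
    (hr : r ∈ weightedRayleighQuotients a b ρ) :
    m / M * (π / (b - a)) ^ 2 ≤ r := by
  obtain ⟨u, u', hu, hu', horth, hden, rfl⟩ := hr
  obtain ⟨hma, haM⟩ := hρ_bounds a (left_mem_Icc.2 hab.le)
  have hM : 0 < M := hm.trans_le (hma.trans haM)
  have hden_pos : 0 < ∫ x in a..b, u x ^ 2 * ρ x := lt_of_le_of_ne
    (integral_nonneg hab.le fun x hx =>
      mul_nonneg (sq_nonneg _) (hm.le.trans (hρ_bounds x hx).1)) hden.symm
  rw [le_div_iff₀ hden_pos, div_mul_eq_mul_div, div_mul_eq_mul_div, div_le_iff₀ hM]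
  linarith [weighted_poincare_of_integral_mul_eq_zero hab hm.le hρ hρ_bounds hu hu' horth]

theorem stmt_17 (L m M Γ : ℝ) (φ : ℝ → ℝ)
    (hL : 0 < L)
    (hφcont : ContinuousOn φ (Set.Icc 0 L))
    (hm : 0 < m) (hφ : ∀ x ∈ Set.Icc 0 L, m ≤ φ x ∧ φ x ≤ M)
    (hΓ : Γ = sInf { r : ℝ | ∃ u u' : ℝ → ℝ,
        (∀ x ∈ Set.Icc 0 L, HasDerivAt u (u' x) x) ∧
        ContinuousOn u' (Set.Icc 0 L) ∧
        (∫ x in (0:ℝ)..L, u x * (φ x) ^ 2) = 0 ∧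
        (∫ x in (0:ℝ)..L, (u x) ^ 2 * (φ x) ^ 2) ≠ 0 ∧
        r = (∫ x in (0:ℝ)..L, (u' x) ^ 2 * (φ x) ^ 2) /
            ∫ x in (0:ℝ)..L, (u x) ^ 2 * (φ x) ^ 2 }) :
    Γ ≥ (m / M) ^ 2 * (π ^ 2 / L ^ 2) := by
  change Γ = sInf (weightedRayleighQuotients 0 L fun x => φ x ^ 2) at hΓ
  have hφsq : ContinuousOn (fun x => φ x ^ 2) (Icc 0 L) := hφcont.pow 2
  have hbounds : ∀ x ∈ Icc 0 L, m ^ 2 ≤ φ x ^ 2 ∧ φ x ^ 2 ≤ M ^ 2 := fun x hx =>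
    ⟨pow_le_pow_left₀ hm.le (hφ x hx).1 2,
      pow_le_pow_left₀ (hm.le.trans (hφ x hx).1) (hφ x hx).2 2⟩
  have hne := weightedRayleighQuotients_nonempty hL hφsq fun x hx =>
    pow_pos (hm.trans_le (hφ x hx).1) 2
  rw [hΓ, ge_iff_le]
  refine le_csInf hne fun r hr => ?_
  calc (m / M) ^ 2 * (π ^ 2 / L ^ 2) = m ^ 2 / M ^ 2 * (π / (L - 0)) ^ 2 := by ring
    _ ≤ r := le_of_mem_weightedRayleighQuotients hL (pow_pos hm 2) hφsq hbounds hr
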